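/- arXiv:0710.2331 — 3 statements merged into one kernel-verified Lean document; each statement's English description precedes it below -/
import Mathlib

section
/- Let p₁, p₂ > 1 and δ₁, δ₂ ≥ 0, and suppose p and δ satisfy 1 < p ≤ min{p₁,p₂}, max{δ₁,δ₂} ≤ δ ≤ δ₁ + δ₂, and p + 2δ ≤ min{p₁ + 2δ₁, p₂ + 2δ₂}. Set δ₀ := min{δ₁,δ₂} and C(p,Δ) := 2^{p+2Δ+1}(1 + 2ζ(p)). If A and B are bounded operators with ‖A‖_{p₁,δ₁} < ∞ and ‖B‖_{p₂,δ₂} < ∞, then ‖AB‖_{p,δ} ≤ C(p, δ − δ₀)·‖A‖_{p₁,δ₁}·‖B‖_{p₂,δ₂}; in particular 𝒴(p₁,δ₁)·𝒴(p₂,δ₂) ⊆ 𝒴(p,δ). -/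
noncomputable section

open ContinuousLinearMap

variable {𝓗 : Type*} [NormedAddCommGroup 𝓗] [InnerProductSpace ℂ 𝓗] [CompleteSpace 𝓗]

/-- `⟨x⟩ := max {1, |x|}`. -/
def jap (x : ℝ) : ℝ := max 1 |x|

/-- `(Pₙ)_{n≥1}` is a family of mutually orthogonal nonzero orthogonal projections
with `Σₙ Pₙ = I` in the strong sense. -/
def ProjFamily (P : ℕ+ → 𝓗 →L[ℂ] 𝓗) : Prop :=
  (∀ n, IsSelfAdjoint (P n)) ∧ (∀ n, (P n).comp (P n) = P n) ∧
  (∀ m n, m ≠ n → (P m).comp (P n) = 0) ∧ (∀ n, P n ≠ 0) ∧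
  (∀ ψ : 𝓗, HasSum (fun n => P n ψ) ψ)

/-- The quantity `⟨m-n⟩^p · max{m,n}^(2δ) · ‖Pₘ A Pₙ‖`; the norm `‖A‖_{p,δ}` is its
supremum over `m, n ≥ 1`. -/
def wnorm (P : ℕ+ → 𝓗 →L[ℂ] 𝓗) (p δ : ℝ) (A : 𝓗 →L[ℂ] 𝓗) (m n : ℕ+) : ℝ :=
  jap (((m : ℕ) : ℝ) - ((n : ℕ) : ℝ)) ^ p * (((max m n : ℕ+) : ℕ) : ℝ) ^ (2 * δ) *
    ‖(P m).comp (A.comp (P n))‖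

/-- `A` is diagonal with respect to the family `P`. -/
def IsDiag (P : ℕ+ → 𝓗 →L[ℂ] 𝓗) (A : 𝓗 →L[ℂ] 𝓗) : Prop :=
  ∀ m n, m ≠ n → (P m).comp (A.comp (P n)) = 0

/-- `Dom(H) = {ψ : Σₙ Eₙ²‖Pₙψ‖² < ∞}`. -/
def HDom (P : ℕ+ → 𝓗 →L[ℂ] 𝓗) (E : ℕ+ → ℝ) : Set 𝓗 :=
  {ψ | Summable fun n => (E n) ^ 2 * ‖P n ψ‖ ^ 2}

/-- The form domain `Q_H = {ψ : Σₙ Eₙ‖Pₙψ‖² < ∞}`. -/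
def QDom (P : ℕ+ → 𝓗 →L[ℂ] 𝓗) (E : ℕ+ → ℝ) : Set 𝓗 :=
  {ψ | Summable fun n => E n * ‖P n ψ‖ ^ 2}

/-- `h = Hψ`, i.e. `h = Σₙ Eₙ Pₙ ψ`. -/
def IsHSum (P : ℕ+ → 𝓗 →L[ℂ] 𝓗) (E : ℕ+ → ℝ) (ψ h : 𝓗) : Prop :=
  HasSum (fun n => (E n : ℂ) • P n ψ) h

/-- `U` is unitary. -/
def IsUnitaryOp (U : 𝓗 →L[ℂ] 𝓗) : Prop := U * star U = 1 ∧ star U * U = 1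

/-- A family of bounded operators which is `C¹` in the strong sense. -/
def StrongC1 (V : ℝ → 𝓗 →L[ℂ] 𝓗) : Prop := ∀ ψ : 𝓗, ContDiff ℝ 1 fun t => V t ψ

/-- `U(t,s)` is a propagator for `H + V(t)`. -/
def IsPropagator (P : ℕ+ → 𝓗 →L[ℂ] 𝓗) (E : ℕ+ → ℝ) (V : ℝ → 𝓗 →L[ℂ] 𝓗)
    (U : ℝ → ℝ → 𝓗 →L[ℂ] 𝓗) : Prop :=
  (∀ t s, IsUnitaryOp (U t s)) ∧
  (∀ ψ : 𝓗, Continuous fun ts : ℝ × ℝ => U ts.1 ts.2 ψ) ∧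
  (∀ t, U t t = 1) ∧
  (∀ t s r, (U t s).comp (U s r) = U t r) ∧
  (∀ t s, ⇑(U t s) '' HDom P E = HDom P E) ∧
  (∀ s : ℝ, ∀ ψ ∈ HDom P E, ∀ t : ℝ, ∃ d : 𝓗,
    HasDerivAt (fun τ => U τ s ψ) d t ∧
    ∀ h : 𝓗, IsHSum P E (U t s ψ) h → Complex.I • d = h + V t (U t s ψ))

/-- The Riemann zeta function `ζ(s) = Σ_{n≥1} n^{-s}` (for real `s > 1`). -/
def rzeta (s : ℝ) : ℝ := ∑' n : ℕ+, (((n : ℕ) : ℝ) ^ s)⁻¹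

/-- The constant `C_p = 2^(p+1) (1 + 2 ζ(p-1))`. -/
def Cconst (p : ℝ) : ℝ := 2 ^ (p + 1) * (1 + 2 * rzeta (p - 1))

/-!
Inserting `Σₖ Pₖ = I` between `A` and `B` gives `‖Pₘ A B Pₙ‖ ≤ Σₖ ‖Aₘₖ‖ ‖Bₖₙ‖`. For each `k`
the larger of `⟨m - k⟩`, `⟨k - n⟩` is at least half of `⟨m - n⟩`, and if `⟨k - n⟩ ≤ ⟨m - k⟩`,
then `max{m, n}` is at most twice `max{k, ⟨m - k⟩}`. Splitting `max{m, n}^{2δ}` between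
`max{m, k}^{2δ₁}`, `max{k, n}^{2δ₂}` and the spare decay `⟨m - k⟩^{p₁ - p}` costs a factor
`2^{2(δ - δ₀)}`, so the `k`-th term, weighted by `⟨m - n⟩^p max{m, n}^{2δ}`, is at most
`2^{p + 2(δ - δ₀)} ‖A‖ ‖B‖ (⟨k - m⟩^{-p} + ⟨k - n⟩^{-p})`. Finally `Σ_{i ∈ ℤ} ⟨i⟩^{-p} = 1 + 2ζ(p)`.
-/

lemma one_le_jap (x : ℝ) : 1 ≤ jap x := le_max_left _ _

lemma jap_pos (x : ℝ) : 0 < jap x := one_pos.trans_le (one_le_jap x)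

lemma abs_le_jap (x : ℝ) : |x| ≤ jap x := le_max_right _ _

lemma inv_jap_rpow_nonneg (x p : ℝ) : 0 ≤ (jap x ^ p)⁻¹ :=
  inv_nonneg.mpr (Real.rpow_nonneg (jap_pos x).le p)

lemma jap_neg (x : ℝ) : jap (-x) = jap x := by rw [jap, jap, abs_neg]

lemma jap_sub_comm (x y : ℝ) : jap (x - y) = jap (y - x) := by rw [← jap_neg, neg_sub]

lemma jap_of_one_le {x : ℝ} (h : 1 ≤ x) : jap x = x := by
  rw [jap, abs_of_nonneg (by linarith), max_eq_right h]

lemma jap_sub_le_add (x y z : ℝ) : jap (x - z) ≤ jap (x - y) + jap (y - z) :=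
  max_le (by linarith [one_le_jap (x - y), jap_pos (y - z)])
    ((abs_sub_le x y z).trans (add_le_add (abs_le_jap _) (abs_le_jap _)))

lemma PNat.cast_max (m n : ℕ+) :
    (((max m n : ℕ+) : ℕ) : ℝ) = max ((m : ℕ) : ℝ) ((n : ℕ) : ℝ) :=
  Monotone.map_max fun _ _ h => by exact_mod_cast h

lemma hasSum_inv_jap_rpow_int {p : ℝ} (hp : 1 < p) :
    HasSum (fun i : ℤ => (jap i ^ p)⁻¹) (1 + 2 * rzeta p) := by
  set g : ℕ → ℝ := fun n => (jap n ^ p)⁻¹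
  have hpnat : HasSum (fun n : ℕ+ => g n) (rzeta p) := by
    have hζ : HasSum (fun n : ℕ+ => (((n : ℕ) : ℝ) ^ p)⁻¹) (rzeta p) :=
      ((Real.summable_nat_rpow_inv.mpr hp).comp_injective PNat.coe_injective).hasSum
    refine hζ.congr_fun fun n => ?_
    simp only [g, jap_of_one_le (Nat.one_le_cast.mpr n.pos)]
  have hnonneg : HasSum (fun n : ℕ => g n) (rzeta p + 1) := by
    simpa [g, jap] using hasSum_pnat_iff.mp hpnat
  have hneg : HasSum (fun n : ℕ => (jap ((-(n + 1) : ℤ) : ℝ) ^ p)⁻¹) (rzeta p) := by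
    refine (hasSum_pnat_iff_hasSum_succ.mp hpnat).congr_fun fun n => ?_
    simp only [g, Int.cast_neg, jap_neg]
    push_cast
    rfl
  rw [show 1 + 2 * rzeta p = (rzeta p + 1) + rzeta p by ring]
  exact hnonneg.of_nat_of_neg_add_one hneg

lemma jap_natCast_sub (k j : ℕ) : jap ((k : ℝ) - j) = jap (((k : ℤ) - j : ℤ) : ℝ) := by
  push_cast; rfl

lemma injective_pnat_sub (j : ℕ+) : Function.Injective fun k : ℕ+ => (k : ℤ) - (j : ℤ) :=
  fun _ _ h => PNat.coe_injective (by simpa using h)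

lemma summable_inv_jap_rpow_sub {p : ℝ} (hp : 1 < p) (j : ℕ+) :
    Summable fun k : ℕ+ => (jap (((k : ℕ) : ℝ) - ((j : ℕ) : ℝ)) ^ p)⁻¹ := by
  simpa only [jap_natCast_sub, Function.comp_def] using
    (hasSum_inv_jap_rpow_int hp).summable.comp_injective (injective_pnat_sub j)

lemma tsum_inv_jap_rpow_sub_le {p : ℝ} (hp : 1 < p) (j : ℕ+) :
    ∑' k : ℕ+, (jap (((k : ℕ) : ℝ) - ((j : ℕ) : ℝ)) ^ p)⁻¹ ≤ 1 + 2 * rzeta p := by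
  rw [← (hasSum_inv_jap_rpow_int hp).tsum_eq]
  simpa only [jap_natCast_sub, Function.comp_def] using
    tsum_comp_le_tsum_of_inj (hasSum_inv_jap_rpow_int hp).summable
      (fun i => inv_jap_rpow_nonneg _ p) (injective_pnat_sub j)

lemma max_rpow_le_rpow_mul_rpow {a b s s₁ s₂ : ℝ} (ha : 1 ≤ a) (hb : 1 ≤ b) (hs : 0 ≤ s)
    (hs₁ : s ≤ s₁) (hs₂ : s ≤ s₂) : max a b ^ s ≤ a ^ s₁ * b ^ s₂ := by
  rcases le_total a b with hab | hba
  · rw [max_eq_right hab]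
    exact (Real.rpow_le_rpow_of_exponent_le hb hs₂).trans
      (le_mul_of_one_le_left (by positivity) (Real.one_le_rpow ha (hs.trans hs₁)))
  · rw [max_eq_left hba]
    exact (Real.rpow_le_rpow_of_exponent_le ha hs₁).trans
      (le_mul_of_one_le_right (by positivity) (Real.one_le_rpow hb (hs.trans hs₂)))

lemma rpow_le_two_rpow_mul_rpow_mul_rpow {x a b s t : ℝ} (hx : 0 < x) (hxa : x ≤ a)
    (hxb : x ≤ 2 * b) (hs : 0 ≤ s) (hst : s ≤ t) :
    x ^ t ≤ 2 ^ (t - s) * (a ^ s * b ^ (t - s)) := by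
  have hb : 0 ≤ b := by linarith
  calc x ^ t = x ^ s * x ^ (t - s) := by rw [← Real.rpow_add hx]; ring_nf
    _ ≤ a ^ s * (2 * b) ^ (t - s) := by
      gcongr
      exact Real.rpow_nonneg (hx.le.trans hxa) s
    _ = 2 ^ (t - s) * (a ^ s * b ^ (t - s)) := by
      rw [Real.mul_rpow zero_le_two hb]; ring

section JapaneseBracketWeights

variable {p p₁ δ δ₁ δ₂ m n k : ℝ}

lemma max_le_two_mul_max_jap (hvu : jap (k - n) ≤ jap (m - k)) :
    max m n ≤ 2 * max k (jap (m - k)) := by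
  have hm : m ≤ k + jap (m - k) := by linarith [le_abs_self (m - k), abs_le_jap (m - k)]
  have hn : n ≤ k + jap (m - k) := by
    linarith [neg_abs_le (k - n), abs_le_jap (k - n)]
  have : k + jap (m - k) ≤ 2 * max k (jap (m - k)) := by
    linarith [le_max_left k (jap (m - k)), le_max_right k (jap (m - k))]
  exact max_le (hm.trans this) (hn.trans this)

lemma jap_sub_le_max (hm : 1 ≤ m) (hk : 0 ≤ k) : jap (m - k) ≤ max m k :=
  max_le (hm.trans (le_max_left m k))
    (abs_sub_le_iff.mpr ⟨by linarith [le_max_left m k], by linarith [le_max_right m k]⟩)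

lemma max_rpow_le_of_jap_le (hδ₁ : 0 ≤ δ₁) (hδ₂ : 0 ≤ δ₂) (hδ₁δ : δ₁ ≤ δ) (hδ₂δ : δ₂ ≤ δ)
    (hδ : δ ≤ δ₁ + δ₂) {e : ℝ} (he : 2 * (δ - δ₁) ≤ e) (hm : 1 ≤ m) (hn : 1 ≤ n) (hk : 0 ≤ k)
    (hvu : jap (k - n) ≤ jap (m - k)) :
    max m n ^ (2 * δ) ≤
      2 ^ (2 * (δ - min δ₁ δ₂)) * (jap (m - k) ^ e * max m k ^ (2 * δ₁) * max k n ^ (2 * δ₂)) := by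
  have hM : 0 < max m n := by positivity
  have hX : 1 ≤ max m k := hm.trans (le_max_left m k)
  have hY : 1 ≤ max k n := hn.trans (le_max_right k n)
  have hu : jap (m - k) ≤ max m k := jap_sub_le_max hm hk
  have hfar := max_le_two_mul_max_jap hvu
  have htwo : ∀ γ, δ - γ ≤ δ - min δ₁ δ₂ →
      (2 : ℝ) ^ (2 * δ - 2 * γ) ≤ 2 ^ (2 * (δ - min δ₁ δ₂)) := fun γ hγ =>
    Real.rpow_le_rpow_of_exponent_le one_le_two (by linarith)
  rcases le_total n m with hnm | hmn
  · have hA : max m n ≤ max m k := by rw [max_eq_left hnm]; exact le_max_left m k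
    have hB : max m n ≤ 2 * max (max k n) (jap (m - k)) :=
      hfar.trans (by gcongr; exact le_max_left k n)
    calc max m n ^ (2 * δ)
        ≤ 2 ^ (2 * δ - 2 * δ₁) *
            (max m k ^ (2 * δ₁) * max (max k n) (jap (m - k)) ^ (2 * δ - 2 * δ₁)) :=
          rpow_le_two_rpow_mul_rpow_mul_rpow hM hA hB (by linarith) (by linarith)
      _ ≤ 2 ^ (2 * (δ - min δ₁ δ₂)) *
            (max m k ^ (2 * δ₁) * (max k n ^ (2 * δ₂) * jap (m - k) ^ e)) := by
          gcongr ?_ * (_ * ?_)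
          · exact htwo δ₁ (by linarith [min_le_left δ₁ δ₂])
          · exact max_rpow_le_rpow_mul_rpow hY (one_le_jap _) (by linarith) (by linarith)
              (by linarith)
      _ = _ := by ring
  · have hA : max m n ≤ max k n := by rw [max_eq_right hmn]; exact le_max_right k n
    have hB : max m n ≤ 2 * max m k :=
      hfar.trans (mul_le_mul_of_nonneg_left (max_le (le_max_right m k) hu) zero_le_two)
    calc max m n ^ (2 * δ)
        ≤ 2 ^ (2 * δ - 2 * δ₂) * (max k n ^ (2 * δ₂) * max m k ^ (2 * δ - 2 * δ₂)) :=
          rpow_le_two_rpow_mul_rpow_mul_rpow hM hA hB (by linarith) (by linarith)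
      _ ≤ 2 ^ (2 * (δ - min δ₁ δ₂)) * (max k n ^ (2 * δ₂) * max m k ^ (2 * δ₁)) := by
          gcongr ?_ * (_ * ?_)
          · exact htwo δ₂ (by linarith [min_le_right δ₁ δ₂])
          · exact Real.rpow_le_rpow_of_exponent_le hX (by linarith)
      _ = 2 ^ (2 * (δ - min δ₁ δ₂)) * (1 * max m k ^ (2 * δ₁) * max k n ^ (2 * δ₂)) := by ring
      _ ≤ _ := by
          gcongr
          exact Real.one_le_rpow (one_le_jap _) (by linarith)

lemma jap_rpow_mul_max_rpow_le_of_jap_le (hp : 0 ≤ p) (hδ₁ : 0 ≤ δ₁) (hδ₂ : 0 ≤ δ₂)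
    (hδ₁δ : δ₁ ≤ δ) (hδ₂δ : δ₂ ≤ δ) (hδ : δ ≤ δ₁ + δ₂) (hsum : p + 2 * δ ≤ p₁ + 2 * δ₁)
    (hm : 1 ≤ m) (hn : 1 ≤ n) (hk : 0 ≤ k) (hvu : jap (k - n) ≤ jap (m - k)) :
    jap (m - n) ^ p * max m n ^ (2 * δ) ≤
      2 ^ (p + 2 * (δ - min δ₁ δ₂)) * (jap (m - k) ^ p₁ * max m k ^ (2 * δ₁)) *
        max k n ^ (2 * δ₂) := by
  have hu := jap_pos (m - k)
  have htri : jap (m - n) ≤ 2 * jap (m - k) := (jap_sub_le_add m k n).trans (by linarith)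
  calc jap (m - n) ^ p * max m n ^ (2 * δ)
      ≤ (2 * jap (m - k)) ^ p * (2 ^ (2 * (δ - min δ₁ δ₂)) *
          (jap (m - k) ^ (p₁ - p) * max m k ^ (2 * δ₁) * max k n ^ (2 * δ₂))) := by
        gcongr
        · exact (jap_pos _).le
        · exact max_rpow_le_of_jap_le hδ₁ hδ₂ hδ₁δ hδ₂δ hδ (by linarith) hm hn hk hvu
    _ = (2 ^ p * 2 ^ (2 * (δ - min δ₁ δ₂))) * ((jap (m - k) ^ p * jap (m - k) ^ (p₁ - p)) *
          max m k ^ (2 * δ₁)) * max k n ^ (2 * δ₂) := by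
        rw [Real.mul_rpow zero_le_two hu.le]; ring
    _ = _ := by rw [← Real.rpow_add two_pos, ← Real.rpow_add hu, add_sub_cancel]

lemma le_mul_rpow_mul_inv_rpow_add {x v w q : ℝ} (hx : 0 ≤ x) (hv : 1 ≤ v) (hpq : p ≤ q)
    (hw : 0 ≤ w) : x ≤ x * v ^ q * (w + (v ^ p)⁻¹) := by
  have hv0 : 0 < v := one_pos.trans_le hv
  have h1 : 1 ≤ v ^ q * (v ^ p)⁻¹ := by
    rw [← Real.rpow_neg hv0.le, ← Real.rpow_add hv0]
    exact Real.one_le_rpow hv (by linarith)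
  calc x ≤ x * (v ^ q * (v ^ p)⁻¹) := le_mul_of_one_le_right hx h1
    _ ≤ x * (v ^ q * (w + (v ^ p)⁻¹)) := by gcongr; linarith
    _ = x * v ^ q * (w + (v ^ p)⁻¹) := by ring

lemma jap_rpow_mul_max_rpow_le {p₂ : ℝ} (hp : 0 ≤ p) (hδ₁ : 0 ≤ δ₁) (hδ₂ : 0 ≤ δ₂)
    (hδ₁δ : δ₁ ≤ δ) (hδ₂δ : δ₂ ≤ δ) (hδ : δ ≤ δ₁ + δ₂) (hsum₁ : p + 2 * δ ≤ p₁ + 2 * δ₁)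
    (hsum₂ : p + 2 * δ ≤ p₂ + 2 * δ₂) (hm : 1 ≤ m) (hn : 1 ≤ n) (hk : 0 ≤ k) :
    jap (m - n) ^ p * max m n ^ (2 * δ) ≤
      2 ^ (p + 2 * (δ - min δ₁ δ₂)) * (jap (m - k) ^ p₁ * max m k ^ (2 * δ₁)) *
        (jap (k - n) ^ p₂ * max k n ^ (2 * δ₂)) * ((jap (m - k) ^ p)⁻¹ + (jap (k - n) ^ p)⁻¹) := by
  rcases le_total (jap (k - n)) (jap (m - k)) with hvu | huv
  · refine (jap_rpow_mul_max_rpow_le_of_jap_le hp hδ₁ hδ₂ hδ₁δ hδ₂δ hδ hsum₁ hm hn hk hvu).trans ?_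
    have := le_mul_rpow_mul_inv_rpow_add (x := 2 ^ (p + 2 * (δ - min δ₁ δ₂)) *
      (jap (m - k) ^ p₁ * max m k ^ (2 * δ₁)) * max k n ^ (2 * δ₂))
      (by have := jap_pos (m - k); positivity)
      (one_le_jap (k - n)) (show p ≤ p₂ by linarith) (inv_jap_rpow_nonneg (m - k) p)
    exact this.trans_eq (by ring)
  · have h := jap_rpow_mul_max_rpow_le_of_jap_le hp hδ₂ hδ₁ hδ₂δ hδ₁δ (by linarith) hsum₂ hn hm hk
      (by rwa [jap_sub_comm k m, jap_sub_comm n k])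
    rw [jap_sub_comm n m, jap_sub_comm n k, max_comm n m, max_comm n k, max_comm k m,
      min_comm] at h
    refine h.trans ?_
    have := le_mul_rpow_mul_inv_rpow_add (x := 2 ^ (p + 2 * (δ - min δ₁ δ₂)) *
      (jap (k - n) ^ p₂ * max k n ^ (2 * δ₂)) * max m k ^ (2 * δ₁))
      (by have := jap_pos (k - n); positivity)
      (one_le_jap (m - k)) (show p ≤ p₁ by linarith) (inv_jap_rpow_nonneg (k - n) p)
    exact this.trans_eq (by ring)

end JapaneseBracketWeights

theorem ContinuousLinearMap.opNorm_comp_le_tsum_of_hasSum_idempotent {𝕜 E F G ι : Type*}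
    [NontriviallyNormedField 𝕜] [SeminormedAddCommGroup E] [SeminormedAddCommGroup F]
    [SeminormedAddCommGroup G] [NormedSpace 𝕜 E] [NormedSpace 𝕜 F] [NormedSpace 𝕜 G]
    {Q : ι → F →L[𝕜] F} (hQ : ∀ y, HasSum (fun k => Q k y) y)
    (hQQ : ∀ k, (Q k).comp (Q k) = Q k) (S : F →L[𝕜] G) (T : E →L[𝕜] F) {g : ι → ℝ}
    (hg : Summable g) (hST : ∀ k, ‖S.comp (Q k)‖ * ‖(Q k).comp T‖ ≤ g k) :
    ‖S.comp T‖ ≤ ∑' k, g k := by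
  have hg0 : ∀ k, 0 ≤ g k := fun k => (mul_nonneg (norm_nonneg _) (norm_nonneg _)).trans (hST k)
  refine opNorm_le_bound _ (tsum_nonneg hg0) fun x => ?_
  have hsum : HasSum (fun k => (S.comp (Q k)) ((Q k).comp T x)) (S (T x)) := by
    simpa only [comp_apply, ← comp_apply (Q _) (Q _), hQQ] using (hQ (T x)).mapL S
  refine hsum.norm_le_of_bounded (hg.hasSum.mul_right ‖x‖) fun k => ?_
  calc ‖(S.comp (Q k)) ((Q k).comp T x)‖ ≤ ‖S.comp (Q k)‖ * (‖(Q k).comp T‖ * ‖x‖) :=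
        le_opNorm_of_le _ (le_opNorm _ _)
    _ ≤ g k * ‖x‖ := by rw [← mul_assoc]; gcongr; exact hST k

section OperatorWeights

variable {E : Type*} [NormedAddCommGroup E] [InnerProductSpace ℂ E]

lemma wnorm_nonneg (P : ℕ+ → E →L[ℂ] E) (p δ : ℝ) (A : E →L[ℂ] E) (m n : ℕ+) :
    0 ≤ wnorm P p δ A m n :=
  mul_nonneg (mul_nonneg (Real.rpow_nonneg (jap_pos _).le _) (Real.rpow_nonneg (by positivity) _))
    (norm_nonneg _)

lemma norm_comp_mul_norm_comp_le (P : ℕ+ → E →L[ℂ] E) {p p₁ p₂ δ δ₁ δ₂ : ℝ} (hp : 0 ≤ p)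
    (hδ₁ : 0 ≤ δ₁) (hδ₂ : 0 ≤ δ₂) (hδ₁δ : δ₁ ≤ δ) (hδ₂δ : δ₂ ≤ δ) (hδ : δ ≤ δ₁ + δ₂)
    (hsum₁ : p + 2 * δ ≤ p₁ + 2 * δ₁) (hsum₂ : p + 2 * δ ≤ p₂ + 2 * δ₂)
    {A B : E →L[ℂ] E} {a b : ℝ} (hA : ∀ m n, wnorm P p₁ δ₁ A m n ≤ a)
    (hB : ∀ m n, wnorm P p₂ δ₂ B m n ≤ b) (m n k : ℕ+) :
    jap (((m : ℕ) : ℝ) - ((n : ℕ) : ℝ)) ^ p * (((max m n : ℕ+) : ℕ) : ℝ) ^ (2 * δ) *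
        (‖(P m).comp (A.comp (P k))‖ * ‖(P k).comp (B.comp (P n))‖) ≤
      2 ^ (p + 2 * (δ - min δ₁ δ₂)) * a * b *
        ((jap (((k : ℕ) : ℝ) - ((m : ℕ) : ℝ)) ^ p)⁻¹ +
          (jap (((k : ℕ) : ℝ) - ((n : ℕ) : ℝ)) ^ p)⁻¹) := by
  have h := jap_rpow_mul_max_rpow_le (p₁ := p₁) (p₂ := p₂) hp hδ₁ hδ₂ hδ₁δ hδ₂δ hδ hsum₁ hsum₂
    (Nat.one_le_cast.mpr m.pos) (Nat.one_le_cast.mpr n.pos) (Nat.cast_nonneg (k : ℕ))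
  have ha : 0 ≤ a := (wnorm_nonneg P p₁ δ₁ A 1 1).trans (hA 1 1)
  calc _ ≤ 2 ^ (p + 2 * (δ - min δ₁ δ₂)) * wnorm P p₁ δ₁ A m k * wnorm P p₂ δ₂ B k n *
        ((jap (((k : ℕ) : ℝ) - ((m : ℕ) : ℝ)) ^ p)⁻¹ +
          (jap (((k : ℕ) : ℝ) - ((n : ℕ) : ℝ)) ^ p)⁻¹) := by
        simp only [wnorm, PNat.cast_max, jap_sub_comm ((k : ℕ) : ℝ) ((m : ℕ) : ℝ)]
        exact (mul_le_mul_of_nonneg_right h (by positivity)).trans_eq (by ring)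
    _ ≤ _ := by
        gcongr
        exacts [add_nonneg (inv_jap_rpow_nonneg _ _) (inv_jap_rpow_nonneg _ _),
          wnorm_nonneg P _ _ _ _ _, hA m k, hB k n]

end OperatorWeights

theorem statement7_general
    (P : ℕ+ → 𝓗 →L[ℂ] 𝓗) (hP : ProjFamily P)
    (p₁ p₂ δ₁ δ₂ p δ : ℝ)
    (hδ₁ : 0 ≤ δ₁) (hδ₂ : 0 ≤ δ₂)
    (hp : 1 < p)
    (hδlow : max δ₁ δ₂ ≤ δ) (hδhigh : δ ≤ δ₁ + δ₂)
    (hsum : p + 2 * δ ≤ min (p₁ + 2 * δ₁) (p₂ + 2 * δ₂))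
    (A B : 𝓗 →L[ℂ] 𝓗) (a b : ℝ)
    (hA : ∀ m n : ℕ+, wnorm P p₁ δ₁ A m n ≤ a)
    (hB : ∀ m n : ℕ+, wnorm P p₂ δ₂ B m n ≤ b) :
    ∀ m n : ℕ+, wnorm P p δ (A.comp B) m n ≤
      2 ^ (p + 2 * (δ - min δ₁ δ₂) + 1) * (1 + 2 * rzeta p) * a * b := by
  intro m n
  obtain ⟨-, hPP, -, -, hPsum⟩ := hP
  set κ : ℝ := 2 ^ (p + 2 * (δ - min δ₁ δ₂))
  set W := jap (((m : ℕ) : ℝ) - ((n : ℕ) : ℝ)) ^ p * (((max m n : ℕ+) : ℕ) : ℝ) ^ (2 * δ)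
  set f : ℕ+ → ℕ+ → ℝ := fun j k => (jap (((k : ℕ) : ℝ) - ((j : ℕ) : ℝ)) ^ p)⁻¹
  have hW : 0 < W := mul_pos (Real.rpow_pos_of_pos (jap_pos _) _) (by positivity)
  have hterm : ∀ k, ‖((P m).comp A).comp (P k)‖ * ‖(P k).comp (B.comp (P n))‖ ≤
      W⁻¹ * (κ * a * b * (f m k + f n k)) := fun k =>
    (le_inv_mul_iff₀ hW).mpr <| norm_comp_mul_norm_comp_le P (by linarith) hδ₁ hδ₂
      (le_of_max_le_left hδlow) (le_of_max_le_right hδlow) hδhigh (le_min_iff.mp hsum).1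
      (le_min_iff.mp hsum).2 hA hB m n k
  have hf : ∀ j, Summable (f j) := summable_inv_jap_rpow_sub hp
  have hop := opNorm_comp_le_tsum_of_hasSum_idempotent hPsum hPP ((P m).comp A) (B.comp (P n))
    (((hf m).add (hf n)).mul_left _ |>.mul_left _) hterm
  calc wnorm P p δ (A.comp B) m n = W * ‖((P m).comp A).comp (B.comp (P n))‖ := rfl
    _ ≤ W * ∑' k, W⁻¹ * (κ * a * b * (f m k + f n k)) := by gcongr
    _ = κ * a * b * (∑' k, f m k + ∑' k, f n k) := by
      rw [tsum_mul_left, tsum_mul_left, (hf m).tsum_add (hf n), mul_inv_cancel_left₀ hW.ne']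
    _ ≤ κ * a * b * ((1 + 2 * rzeta p) + (1 + 2 * rzeta p)) := by
      have ha : 0 ≤ a := (wnorm_nonneg P p₁ δ₁ A 1 1).trans (hA 1 1)
      have hb : 0 ≤ b := (wnorm_nonneg P p₂ δ₂ B 1 1).trans (hB 1 1)
      gcongr <;> exact tsum_inv_jap_rpow_sub_le hp _
    _ = 2 ^ (p + 2 * (δ - min δ₁ δ₂) + 1) * (1 + 2 * rzeta p) * a * b := by
      rw [Real.rpow_add_one two_ne_zero]; ring

/-- Lemma 2.2: product formula for the classes `𝒴(p,δ)`,
`‖AB‖_{p,δ} ≤ C(p, δ-δ₀) ‖A‖_{p₁,δ₁} ‖B‖_{p₂,δ₂}` with `C(p,Δ) = 2^{p+2Δ+1}(1+2ζ(p))`. -/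
theorem statement7
    (P : ℕ+ → 𝓗 →L[ℂ] 𝓗) (hP : ProjFamily P)
    (p₁ p₂ δ₁ δ₂ p δ : ℝ)
    (hp₁ : 1 < p₁) (hp₂ : 1 < p₂) (hδ₁ : 0 ≤ δ₁) (hδ₂ : 0 ≤ δ₂)
    (hp : 1 < p) (hpmin : p ≤ min p₁ p₂)
    (hδlow : max δ₁ δ₂ ≤ δ) (hδhigh : δ ≤ δ₁ + δ₂)
    (hsum : p + 2 * δ ≤ min (p₁ + 2 * δ₁) (p₂ + 2 * δ₂))
    (A B : 𝓗 →L[ℂ] 𝓗) (a b : ℝ)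
    (hA : ∀ m n : ℕ+, wnorm P p₁ δ₁ A m n ≤ a)
    (hB : ∀ m n : ℕ+, wnorm P p₂ δ₂ B m n ≤ b) :
    ∀ m n : ℕ+, wnorm P p δ (A.comp B) m n ≤
      2 ^ (p + 2 * (δ - min δ₁ δ₂) + 1) * (1 + 2 * rzeta p) * a * b :=
  statement7_general P hP p₁ p₂ δ₁ δ₂ p δ hδ₁ hδ₂ hp hδlow hδhigh hsum A B a b hA hB

end
end

section
/- Let Φ(x) := e^x − (e^x − 1)/x for x > 0, Φ(0) := 0. Let (x_s)_{s≥1} be a sequence of nonnegative real numbers with x_1 < 1 and x_{s+1} ≤ Φ(x_s)·x_s for all s ≥ 1. Then: (1) x_{s+1} ≤ x_s² for all s; (2) x_s ≤ x_1^{2^{s−1}} for all s; and (3) Σ_{s=1}^∞ x_s ≤ x_1/(1 − x_1). -/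
/-!
On `[0, 1]` one has `Φ(x) ≤ x`, i.e. `x eˣ - eˣ + 1 ≤ x²`, so the recursion gives `x_{s+1} ≤ x_s²`
as long as `x_s ≤ 1`, which is preserved. Iterating the squaring yields `x_s ≤ x_1^{2^{s-1}}`,
and since `s ≤ 2^{s-1}` the sequence is dominated by the geometric series `∑ x_1^s = x_1/(1 - x_1)`.
-/

noncomputable section

/-- The function `Φ(x) = e^x - (e^x - 1)/x`, `Φ(0) = 0`. -/
def Phi (x : ℝ) : ℝ := if x = 0 then 0 else Real.exp x - (Real.exp x - 1) / x

lemma Phi_le_self {x : ℝ} (h0 : 0 ≤ x) (h1 : x ≤ 1) : Phi x ≤ x := by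
  rcases h0.eq_or_lt with rfl | hpos
  · simp [Phi]
  rw [Phi, if_neg hpos.ne', sub_le_iff_le_add, ← sub_le_iff_le_add', le_div_iff₀ hpos]
  have hexp : x + 1 ≤ Real.exp x := Real.add_one_le_exp x
  -- `(1 - x)(eˣ - x - 1) ≥ 0` rearranges to `x eˣ - eˣ + 1 ≤ x²`.
  nlinarith [mul_nonneg (sub_nonneg.2 h1) (sub_nonneg.2 hexp)]

lemma Phi_mul_self_le_sq {x : ℝ} (h0 : 0 ≤ x) (h1 : x ≤ 1) : Phi x * x ≤ x ^ 2 :=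
  sq x ▸ mul_le_mul_of_nonneg_right (Phi_le_self h0 h1) h0

lemma le_pow_two_pow_pred_of_le_sq {x : ℕ+ → ℝ} (hx : ∀ s, 0 ≤ x s)
    (hsq : ∀ s, x (s + 1) ≤ x s ^ 2) (s : ℕ+) : x s ≤ x 1 ^ 2 ^ ((s : ℕ) - 1) := by
  induction s using PNat.recOn with
  | one => simp
  | succ s ih =>
    have hexp : 2 ^ (((s + 1 : ℕ+) : ℕ) - 1) = 2 ^ ((s : ℕ) - 1) * 2 := by
      rw [PNat.add_coe, PNat.one_coe, Nat.add_sub_cancel, ← pow_succ, Nat.sub_add_cancel s.pos]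
    calc x (s + 1) ≤ x s ^ 2 := hsq s
      _ ≤ (x 1 ^ 2 ^ ((s : ℕ) - 1)) ^ 2 := pow_le_pow_left₀ (hx s) ih 2
      _ = x 1 ^ 2 ^ (((s + 1 : ℕ+) : ℕ) - 1) := by rw [hexp, pow_mul]

lemma pow_two_pow_pred_le_pow {r : ℝ} (h0 : 0 ≤ r) (h1 : r ≤ 1) (s : ℕ+) :
    r ^ 2 ^ ((s : ℕ) - 1) ≤ r ^ (s : ℕ) := by
  refine pow_le_pow_of_le_one h0 h1 ?_
  have := Nat.lt_two_pow_self (n := (s : ℕ) - 1)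
  omega

lemma hasSum_pnat_geometric {r : ℝ} (h0 : 0 ≤ r) (h1 : r < 1) :
    HasSum (fun s : ℕ+ => r ^ (s : ℕ)) (r / (1 - r)) := by
  rw [hasSum_pnat_iff_hasSum_succ (f := (r ^ ·))]
  simpa only [pow_succ', div_eq_mul_inv] using (hasSum_geometric_of_lt_one h0 h1).mul_left r

/-- the recursively bounded sequence from Subsection 5.3. -/
theorem statement17 (x : ℕ+ → ℝ) (hx : ∀ s, 0 ≤ x s) (h1 : x 1 < 1)
    (hrec : ∀ s : ℕ+, x (s + 1) ≤ Phi (x s) * x s) :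
    (∀ s : ℕ+, x (s + 1) ≤ x s ^ 2) ∧
    (∀ s : ℕ+, x s ≤ x 1 ^ 2 ^ ((s : ℕ) - 1)) ∧
    Summable x ∧ ∑' s : ℕ+, x s ≤ x 1 / (1 - x 1) := by
  have hlt : ∀ s, x s < 1 := by
    intro s
    induction s using PNat.recOn with
    | one => exact h1
    | succ s ih =>
      exact (hrec s).trans_lt <|
        (Phi_mul_self_le_sq (hx s) ih.le).trans_lt (pow_lt_one₀ (hx s) ih two_ne_zero)
  have hsq : ∀ s, x (s + 1) ≤ x s ^ 2 := fun s =>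
    (hrec s).trans (Phi_mul_self_le_sq (hx s) (hlt s).le)
  have hpow := le_pow_two_pow_pred_of_le_sq hx hsq
  have hgeom : ∀ s, x s ≤ x 1 ^ (s : ℕ) := fun s =>
    (hpow s).trans (pow_two_pow_pred_le_pow (hx 1) h1.le s)
  have hsum := hasSum_pnat_geometric (hx 1) h1
  have hsumm : Summable x := hsum.summable.of_nonneg_of_le hx hgeom
  exact ⟨hsq, hpow, hsumm, hasSum_le hgeom hsumm.hasSum hsum⟩

end
end

section
/- Let γ ∈ (0,1/2], r ≥ 2, and let i ≥ 1 be an integer. Let Y be a bounded diagonal operator with ‖Y‖_{∞,γ} := sup_n n^{2γ}‖Y P_n‖ < ∞, and let F be a bounded operator with ‖F‖_{r,iγ} < ∞. Then the commutator [F,Y] = FY − YF satisfies ‖[F,Y]‖_{r−1,(i+1)γ} ≤ 4·‖F‖_{r,iγ}·‖Y‖_{∞,γ}. -/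
noncomputable section

open ContinuousLinearMap

variable {𝓗 : Type*} [NormedAddCommGroup 𝓗] [InnerProductSpace ℂ 𝓗] [CompleteSpace 𝓗]

/-! Since `Y` is block diagonal and `∑ Pₙ = 1`, `Y` commutes with every `Pₙ`, so
`Pₘ [F, Y] Pₙ = (Pₘ F Pₙ)(Y Pₙ) - (Y Pₘ)(Pₘ F Pₙ)`. The extra weight `max{m,n}^{2γ}` is traded
for `n^{2γ}` or `m^{2γ}` at the price `2⟨m-n⟩` (because `max{m,n} ≤ min{m,n} + ⟨m-n⟩` and
`2γ ≤ 1`), and that factor `⟨m-n⟩` is paid by one power of the off-diagonal decay. -/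

section BlockDiagonal

variable {𝕜 E ι : Type*} [NontriviallyNormedField 𝕜] [NormedAddCommGroup E] [NormedSpace 𝕜 E]
  (P : ι → E →L[𝕜] E) {Y : E →L[𝕜] E}

theorem comp_proj_eq_proj_comp_comp_proj (hP : ∀ x, HasSum (fun i => P i x) x)
    (hY : ∀ i j, i ≠ j → P i ∘L Y ∘L P j = 0) (j : ι) :
    Y ∘L P j = P j ∘L Y ∘L P j := by
  ext x
  refine (hP (Y (P j x))).unique (hasSum_single j fun i hi => ?_)
  simpa using congr($(hY i j hi) x)

theorem proj_comp_eq_proj_comp_comp_proj (hP : ∀ x, HasSum (fun i => P i x) x)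
    (hY : ∀ i j, i ≠ j → P i ∘L Y ∘L P j = 0) (j : ι) :
    P j ∘L Y = P j ∘L Y ∘L P j := by
  ext x
  refine ((P j ∘L Y).hasSum (hP x)).unique (hasSum_single j fun i hi => ?_)
  simpa using congr($(hY j i hi.symm) x)

theorem proj_comp_eq_comp_proj (hP : ∀ x, HasSum (fun i => P i x) x)
    (hY : ∀ i j, i ≠ j → P i ∘L Y ∘L P j = 0) (j : ι) :
    P j ∘L Y = Y ∘L P j :=
  (proj_comp_eq_proj_comp_comp_proj P hP hY j).trans
    (comp_proj_eq_proj_comp_comp_proj P hP hY j).symm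

theorem proj_comp_commutator_comp_proj (hP : ∀ x, HasSum (fun i => P i x) x)
    (hY : ∀ i j, i ≠ j → P i ∘L Y ∘L P j = 0) (F : E →L[𝕜] E) (m n : ι) :
    P m ∘L (F ∘L Y - Y ∘L F) ∘L P n =
      (P m ∘L F ∘L P n) ∘L (Y ∘L P n) - (P m ∘L Y) ∘L (P m ∘L F ∘L P n) := by
  ext x
  have hn := congr($(comp_proj_eq_proj_comp_comp_proj P hP hY n) x)
  have hm := congr($(proj_comp_eq_proj_comp_comp_proj P hP hY m) (F (P n x)))
  simp only [comp_apply, sub_apply, map_sub] at hn hm ⊢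
  rw [← hn, ← hm]

theorem norm_proj_comp_commutator_comp_proj_le (hP : ∀ x, HasSum (fun i => P i x) x)
    (hY : ∀ i j, i ≠ j → P i ∘L Y ∘L P j = 0) (F : E →L[𝕜] E) (m n : ι) :
    ‖P m ∘L (F ∘L Y - Y ∘L F) ∘L P n‖ ≤
      ‖P m ∘L F ∘L P n‖ * (‖Y ∘L P n‖ + ‖Y ∘L P m‖) := by
  rw [proj_comp_commutator_comp_proj P hP hY, proj_comp_eq_comp_proj P hP hY]
  calc _ ≤ ‖(P m ∘L F ∘L P n) ∘L (Y ∘L P n)‖ + ‖(Y ∘L P m) ∘L (P m ∘L F ∘L P n)‖ :=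
        norm_sub_le _ _
    _ ≤ ‖P m ∘L F ∘L P n‖ * ‖Y ∘L P n‖ + ‖Y ∘L P m‖ * ‖P m ∘L F ∘L P n‖ :=
        add_le_add (opNorm_comp_le _ _) (opNorm_comp_le _ _)
    _ = _ := by ring

end BlockDiagonal

theorem rpow_le_two_mul_mul_rpow {M t a s : ℝ} (hM : 0 ≤ M) (ht : 1 ≤ t) (ha : 1 ≤ a)
    (hMt : M ≤ t + a) (hs₀ : 0 ≤ s) (hs₁ : s ≤ 1) : M ^ s ≤ 2 * a * t ^ s := by
  calc M ^ s ≤ (2 * a * t) ^ s := Real.rpow_le_rpow hM (by nlinarith) hs₀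
    _ = (2 * a) ^ s * t ^ s := Real.mul_rpow (by linarith) (by linarith)
    _ ≤ 2 * a * t ^ s := by
        gcongr
        exact Real.rpow_le_self_of_one_le (by linarith) hs₁

theorem max_le_min_add_jap (x y : ℝ) : max x y ≤ min x y + jap (x - y) := by
  have := max_sub_min_eq_abs' x y
  have : |x - y| ≤ jap (x - y) := le_max_right _ _
  linarith

theorem wnorm_commutator_le {E : Type*} [NormedAddCommGroup E] [InnerProductSpace ℂ E]
    (P : ℕ+ → E →L[ℂ] E) (hP : ∀ x, HasSum (fun i => P i x) x) {Y : E →L[ℂ] E}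
    (hYd : IsDiag P Y) {γ y : ℝ} (hγ₀ : 0 ≤ γ) (hγ₁ : γ ≤ 1 / 2)
    (hY : ∀ n : ℕ+, ((n : ℕ) : ℝ) ^ (2 * γ) * ‖Y ∘L P n‖ ≤ y) (F : E →L[ℂ] E) (p δ : ℝ)
    (m n : ℕ+) :
    wnorm P (p - 1) (δ + γ) (F ∘L Y - Y ∘L F) m n ≤ 4 * wnorm P p δ F m n * y := by
  set a := jap (((m : ℕ) : ℝ) - ((n : ℕ) : ℝ))
  set M := (((max m n : ℕ+) : ℕ) : ℝ)
  have ha : 1 ≤ a := le_max_left _ _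
  have hM : M = max ((m : ℕ) : ℝ) ((n : ℕ) : ℝ) :=
    Monotone.map_max (f := fun k : ℕ+ => ((k : ℕ) : ℝ)) fun _ _ h => Nat.cast_le.mpr h
  have hMa : M ≤ min ((m : ℕ) : ℝ) ((n : ℕ) : ℝ) + a := hM ▸ max_le_min_add_jap _ _
  have hweight (j : ℕ+) (hj : M ≤ (j : ℝ) + a) : M ^ (2 * γ) * ‖Y ∘L P j‖ ≤ 2 * a * y :=
    calc M ^ (2 * γ) * ‖Y ∘L P j‖ ≤ 2 * a * ((j : ℝ) ^ (2 * γ)) * ‖Y ∘L P j‖ := by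
          gcongr
          exact rpow_le_two_mul_mul_rpow (by positivity) (Nat.one_le_cast.mpr j.pos) ha hj
            (by linarith) (by linarith)
      _ ≤ 2 * a * y := by rw [mul_assoc]; gcongr; exact hY j
  have hsplit : M ^ (2 * (δ + γ)) = M ^ (2 * δ) * M ^ (2 * γ) := by
    rw [mul_add, Real.rpow_add (by positivity)]
  have hap : a ^ (p - 1) * a = a ^ p := by
    rw [← Real.rpow_add_one (by positivity), sub_add_cancel]
  calc wnorm P (p - 1) (δ + γ) (F ∘L Y - Y ∘L F) m n
      ≤ a ^ (p - 1) * (M ^ (2 * δ) * M ^ (2 * γ)) *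
          (‖P m ∘L F ∘L P n‖ * (‖Y ∘L P n‖ + ‖Y ∘L P m‖)) := by
        rw [wnorm, ← hsplit]
        gcongr
        exact norm_proj_comp_commutator_comp_proj_le P hP hYd F m n
    _ = a ^ (p - 1) * M ^ (2 * δ) * ‖P m ∘L F ∘L P n‖ *
          (M ^ (2 * γ) * ‖Y ∘L P n‖ + M ^ (2 * γ) * ‖Y ∘L P m‖) := by ring
    _ ≤ a ^ (p - 1) * M ^ (2 * δ) * ‖P m ∘L F ∘L P n‖ * (2 * a * y + 2 * a * y) := by
        gcongr ?_ * (?_ + ?_)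
        · exact hweight n (hMa.trans (by gcongr; exact min_le_right _ _))
        · exact hweight m (hMa.trans (by gcongr; exact min_le_left _ _))
    _ = 4 * wnorm P p δ F m n * y := by
        rw [wnorm, ← hap]
        ring

theorem statement19_general
    (P : ℕ+ → 𝓗 →L[ℂ] 𝓗) (hP : ProjFamily P)
    (γ : ℝ) (hγ0 : 0 < γ) (hγh : γ ≤ 1 / 2)
    (r : ℝ) (k : ℕ)
    (Y : 𝓗 →L[ℂ] 𝓗) (hYd : IsDiag P Y)
    (y : ℝ) (hY : ∀ n : ℕ+, ((n : ℕ) : ℝ) ^ (2 * γ) * ‖Y.comp (P n)‖ ≤ y)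
    (F : 𝓗 →L[ℂ] 𝓗) (f : ℝ)
    (hF : ∀ m n : ℕ+, wnorm P r ((k : ℝ) * γ) F m n ≤ f) :
    ∀ m n : ℕ+,
      wnorm P (r - 1) (((k : ℝ) + 1) * γ) (F.comp Y - Y.comp F) m n ≤ 4 * f * y := by
  obtain ⟨-, -, -, -, hsum⟩ := hP
  intro m n
  have hy : 0 ≤ y := le_trans (by positivity) (hY 1)
  rw [add_one_mul]
  calc wnorm P (r - 1) ((k : ℝ) * γ + γ) (F ∘L Y - Y ∘L F) m n
      ≤ 4 * wnorm P r ((k : ℝ) * γ) F m n * y :=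
        wnorm_commutator_le P hsum hYd hγ0.le hγh hY F r _ m n
    _ ≤ 4 * f * y := by gcongr; exact hF m n

/-- estimate on `[F,Y]` for diagonal `Y`, from the proof of
Proposition 4.1: `‖[F,Y]‖_{r-1,(i+1)γ} ≤ 4 ‖F‖_{r,iγ} ‖Y‖_{∞,γ}`. -/
theorem statement19
    (P : ℕ+ → 𝓗 →L[ℂ] 𝓗) (hP : ProjFamily P)
    (γ : ℝ) (hγ0 : 0 < γ) (hγh : γ ≤ 1 / 2)
    (r : ℝ) (hr : 2 ≤ r) (k : ℕ) (hk : 1 ≤ k)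
    (Y : 𝓗 →L[ℂ] 𝓗) (hYd : IsDiag P Y)
    (y : ℝ) (hY : ∀ n : ℕ+, ((n : ℕ) : ℝ) ^ (2 * γ) * ‖Y.comp (P n)‖ ≤ y)
    (F : 𝓗 →L[ℂ] 𝓗) (f : ℝ)
    (hF : ∀ m n : ℕ+, wnorm P r ((k : ℝ) * γ) F m n ≤ f) :
    ∀ m n : ℕ+,
      wnorm P (r - 1) (((k : ℝ) + 1) * γ) (F.comp Y - Y.comp F) m n ≤ 4 * f * y :=
  statement19_general P hP γ hγ0 hγh r k Y hYd y hY F f hF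

end
end
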